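/- arXiv:1812.09594 — 11 statements merged into one kernel-verified Lean document; each statement's English description precedes it below -/
import Mathlib

section
/- For every positive integer n, every sum-free set A ⊆ {1,...,n} such that 2n+1 is not in (3A) ∪ (4A) satisfies |A| ≤ ⌊(n+1)/3⌋. -/
open Pointwise

/-!
Put `T = A ∪ 2A ⊆ [1, 2n]`. Sum-freeness makes the union disjoint, and no two elements of `T`
add up to `2n + 1`, since such a sum would lie in `2A ⊆ [2, 2n]`, in `3A` or in `4A`. So `T` meets
each pair `{x, 2n + 1 - x}` at most once, whence `|A| + |2A| ≤ n`; with `|2A| ≥ 2|A| - 1`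
(Cauchy–Davenport over `ℕ`) this gives `3|A| ≤ n + 1`.
-/

open Finset

namespace Finset

theorem two_mul_card_le_of_forall_add_ne {T : Finset ℕ} {a b : ℕ} (hT : T ⊆ Icc a b)
    (hpair : ∀ x ∈ T, ∀ y ∈ T, x + y ≠ a + b) : 2 * #T ≤ b + 1 - a := by
  have hmem : ∀ x ∈ T, a ≤ x ∧ x ≤ b := fun x hx => mem_Icc.1 (hT hx)
  have hcard_image : #(T.image (a + b - ·)) = #T :=
    card_image_of_injOn fun x hx y hy hxy => by
      have := hmem x hx; have := hmem y hy; omega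
  have hdisj : Disjoint T (T.image (a + b - ·)) := by
    refine disjoint_left.2 fun x hx hx' => ?_
    obtain ⟨y, hy, rfl⟩ := mem_image.1 hx'
    exact hpair _ hx y hy (by have := hmem y hy; omega)
  have hunion : T ∪ T.image (a + b - ·) ⊆ Icc a b :=
    union_subset hT <| image_subset_iff.2 fun x hx => by
      have := hmem x hx; rw [mem_Icc]; omega
  calc 2 * #T = #(T ∪ T.image (a + b - ·)) := by
        rw [card_union_of_disjoint hdisj, hcard_image, two_mul]
    _ ≤ #(Icc a b) := card_le_card hunion
    _ = b + 1 - a := Nat.card_Icc a b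

theorem disjoint_add_self_of_forall_add_notMem {α : Type*} [Add α] [DecidableEq α]
    {A : Finset α} (hsf : ∀ x ∈ A, ∀ y ∈ A, x + y ∉ A) : Disjoint A (A + A) := by
  refine disjoint_left.2 fun z hz hz' => ?_
  obtain ⟨x, hx, y, hy, rfl⟩ := mem_add.1 hz'
  exact hsf x hx y hy hz

theorem add_mem_of_mem_union_add_self {α : Type*} [AddCommSemigroup α] [DecidableEq α]
    {A : Finset α} {x y : α} (hx : x ∈ A ∪ (A + A)) (hy : y ∈ A ∪ (A + A)) :
    x + y ∈ A + A ∪ ((A + A + A) ∪ (A + A + A + A)) := by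
  simp only [mem_union] at hx hy ⊢
  rcases hx with hx | hx <;> rcases hy with hy | hy
  · exact .inl (add_mem_add hx hy)
  · exact .inr <| .inl <| add_comm x y ▸ add_mem_add hy hx
  · exact .inr <| .inl <| add_mem_add hx hy
  · exact .inr <| .inr <| add_assoc (A + A) A A ▸ add_mem_add hx hy

end Finset

theorem sumfree_forbidden_3A4A_max_general (n : ℕ) (A : Finset ℕ)
    (hsub : A ⊆ Finset.Icc 1 n)
    (hsf : ∀ x ∈ A, ∀ y ∈ A, x + y ∉ A)
    (hforb : 2 * n + 1 ∉ (A + A + A) ∪ (A + A + A + A)) :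
    A.card ≤ (n + 1) / 3 := by
  obtain rfl | hA := A.eq_empty_or_nonempty
  · simp
  have hAA : A + A ⊆ Icc 2 (2 * n) :=
    (add_subset_add hsub hsub).trans <|
      (Icc_add_Icc_subset 1 n 1 n).trans (Icc_subset_Icc le_rfl (by omega))
  have hT : A ∪ (A + A) ⊆ Icc 1 (2 * n) :=
    union_subset (hsub.trans (Icc_subset_Icc le_rfl (by omega)))
      (hAA.trans (Icc_subset_Icc (by omega) le_rfl))
  have hpair : ∀ x ∈ A ∪ (A + A), ∀ y ∈ A ∪ (A + A), x + y ≠ 1 + 2 * n := by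
    intro x hx y hy hxy
    rcases mem_union.1 (add_mem_of_mem_union_add_self hx hy) with h2 | h34
    · have := mem_Icc.1 (hAA h2); omega
    · exact hforb (by rwa [hxy, Nat.add_comm 1] at h34)
  have hcard := two_mul_card_le_of_forall_add_ne hT hpair
  rw [card_union_of_disjoint (disjoint_add_self_of_forall_add_notMem hsf)] at hcard
  have hCD := cauchy_davenport_add_of_linearOrder_isCancelAdd hA hA
  omega

theorem sumfree_forbidden_3A4A_max (n : ℕ) (hn : 0 < n) (A : Finset ℕ)
    (hsub : A ⊆ Finset.Icc 1 n)
    (hsf : ∀ x ∈ A, ∀ y ∈ A, x + y ∉ A)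
    (hforb : 2 * n + 1 ∉ (A + A + A) ∪ (A + A + A + A)) :
    A.card ≤ (n + 1) / 3 :=
  sumfree_forbidden_3A4A_max_general n A hsub hsf hforb
end

section
/- For every positive integer n, every sum-free set A ⊆ {1,...,n} such that 2n+1 is not representable as a sum of any finite number of (not necessarily distinct) elements of A satisfies |A| ≤ ⌊(n+1)/3⌋. -/
open Pointwise Finset

/-!
Let `B = A ∪ (A + A)`. Sum-freeness makes the union disjoint, so Cauchy–Davenport gives
`|B| ≥ 3|A| - 1`. Every sum of two elements of `B` is a sum of two to four elements of `A`, hence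
differs from `2n + 1`; so `B ⊆ [1, 2n]` is disjoint from its reflection `2n + 1 - B`, and `|B| ≤ n`.
-/

lemma AddSubmonoid.exists_fin_sum_of_mem_closure {M : Type*} [AddCommMonoid M] {s : Set M}
    {x : M} (hx : x ∈ closure s) : ∃ (k : ℕ) (f : Fin k → M), (∀ i, f i ∈ s) ∧ ∑ i, f i = x := by
  obtain ⟨l, hl, rfl⟩ := exists_list_of_mem_closure hx
  exact ⟨l.length, fun i ↦ l[i.1], fun i ↦ hl _ (List.getElem_mem _), Fin.sum_univ_getElem l⟩

lemma Finset.two_mul_card_le_of_add_ne {B : Finset ℕ} {m : ℕ} (hB : B ⊆ Icc 1 m)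
    (hsum : ∀ x ∈ B, ∀ y ∈ B, x + y ≠ m + 1) : 2 * #B ≤ m := by
  have hmem : ∀ x ∈ B, 1 ≤ x ∧ x ≤ m := fun x hx ↦ mem_Icc.mp (hB hx)
  set R := B.image (m + 1 - ·)
  have hR : R ⊆ Icc 1 m := by
    simp only [R, image_subset_iff, mem_Icc]
    intro x hx
    have := hmem x hx
    omega
  have hcardR : #R = #B := card_image_of_injOn fun x hx y hy hxy ↦ by
    have := hmem x hx
    have := hmem y hy
    omega
  have hdisj : Disjoint B R := by
    simp only [R, disjoint_left, mem_image, not_exists, not_and]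
    intro x hx y hy hyx
    have := hmem y hy
    exact hsum x hx y hy (by omega)
  calc 2 * #B = #(B ∪ R) := by rw [card_union_of_disjoint hdisj, hcardR, two_mul]
    _ ≤ #(Icc 1 m) := card_le_card (union_subset hB hR)
    _ = m := by simp

lemma Finset.three_mul_card_le_card_union_add_self_add_one {α : Type*} [LinearOrder α] [Add α]
    [IsCancelAdd α] [AddLeftMono α] [AddRightMono α] {A : Finset α}
    (hA : ∀ x ∈ A, ∀ y ∈ A, x + y ∉ A) : 3 * #A ≤ #(A ∪ (A + A)) + 1 := by
  obtain rfl | hne := A.eq_empty_or_nonempty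
  · simp
  have hdisj : Disjoint A (A + A) := by
    simp only [disjoint_left, mem_add, not_exists, not_and]
    rintro z hz x hx y hy rfl
    exact hA x hx y hy hz
  have := cauchy_davenport_add_of_linearOrder_isCancelAdd hne hne
  rw [card_union_of_disjoint hdisj]
  omega

theorem sumfree_forbidden_sum_max_general (n : ℕ) (A : Finset ℕ)
    (hsub : A ⊆ Finset.Icc 1 n)
    (hsf : ∀ x ∈ A, ∀ y ∈ A, x + y ∉ A)
    (hforb : ∀ (k : ℕ) (f : Fin k → ℕ), (∀ i, f i ∈ A) → ∑ i, f i ≠ 2 * n + 1) :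
    A.card ≤ (n + 1) / 3 := by
  set B := A ∪ (A + A)
  have hB : B ⊆ Icc 1 (2 * n) := by
    refine union_subset (hsub.trans (Icc_subset_Icc le_rfl (by omega))) ?_
    exact (add_subset_add hsub hsub).trans
      ((Icc_add_Icc_subset _ _ _ _).trans (Icc_subset_Icc (by omega) (by omega)))
  have hB_closure : ∀ x ∈ B, x ∈ AddSubmonoid.closure (A : Set ℕ) := by
    simp only [B, mem_union, mem_add]
    rintro x (hx | ⟨y, hy, z, hz, rfl⟩)
    · exact AddSubmonoid.subset_closure hx
    · exact add_mem (AddSubmonoid.subset_closure hy) (AddSubmonoid.subset_closure hz)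
  have hnot_mem : 2 * n + 1 ∉ AddSubmonoid.closure (A : Set ℕ) := fun h ↦ by
    obtain ⟨k, f, hf, hsum⟩ := AddSubmonoid.exists_fin_sum_of_mem_closure h
    exact hforb k f hf hsum
  have hupper := two_mul_card_le_of_add_ne hB fun x hx y hy hxy ↦
    hnot_mem (hxy ▸ add_mem (hB_closure x hx) (hB_closure y hy))
  have hlower : 3 * #A ≤ #B + 1 := three_mul_card_le_card_union_add_self_add_one hsf
  omega

theorem sumfree_forbidden_sum_max (n : ℕ) (hn : 0 < n) (A : Finset ℕ)
    (hsub : A ⊆ Finset.Icc 1 n)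
    (hsf : ∀ x ∈ A, ∀ y ∈ A, x + y ∉ A)
    (hforb : ∀ (k : ℕ) (f : Fin k → ℕ), (∀ i, f i ∈ A) → ∑ i, f i ≠ 2 * n + 1) :
    A.card ≤ (n + 1) / 3 :=
  sumfree_forbidden_sum_max_general n A hsub hsf hforb
end

section
/- For every positive integer n, the maximum size of a set A ⊆ {1,...,n} that is sum-free and satisfies 2n ∉ ∑A is exactly ⌊(n-1)/3⌋. -/
/-!
Let `A ⊆ [1, n]` be sum-free with `2n ∉ ∑A`. Then `1 ∉ A` (else `2n = 1 + ⋯ + 1`) and `n ∉ A`, so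
`A ∪ (A + A) ⊆ [2, 2n - 2]`. Sum-freeness makes this union disjoint, so by Cauchy–Davenport it has
at least `3|A| - 1` elements, all lying in `∑A`. No two of them add up to `2n`, so it meets each
pair `{z, 2n - z}` at most once, giving `2(3|A| - 1) ≤ 2n - 3`, i.e. `|A| ≤ (n - 1) / 3`.
Conversely, the top `(n - 1) / 3` elements of `[1, n - 1]` are sum-free, and a sum of `k` of them is
at most `2n - 2` for `k ≤ 2` and more than `2n` for `k ≥ 3`.
-/

open Finset Pointwise

lemma AddSubmonoid.exists_fin_sum_eq_of_mem_closure {M : Type*} [AddCommMonoid M] {s : Set M}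
    {x : M} (hx : x ∈ AddSubmonoid.closure s) :
    ∃ (k : ℕ) (f : Fin k → M), (∀ i, f i ∈ s) ∧ ∑ i, f i = x := by
  obtain ⟨l, hl, rfl⟩ := AddSubmonoid.exists_list_of_mem_closure hx
  exact ⟨l.length, fun i => l[i.1], fun i => hl _ (List.getElem_mem _), Fin.sum_univ_getElem l⟩

lemma Nat.fin_sum_ne_of_mem_Icc {k lo hi t : ℕ} (f : Fin k → ℕ) (hf : ∀ i, f i ∈ Icc lo hi)
    (h_hi : 2 * hi < t) (h_lo : t < 3 * lo) : ∑ i, f i ≠ t := by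
  have h_ge : k * lo ≤ ∑ i, f i := by
    simpa using card_nsmul_le_sum univ f lo fun i _ => (mem_Icc.mp (hf i)).1
  have h_le : ∑ i, f i ≤ k * hi := by
    simpa using sum_le_card_nsmul univ f hi fun i _ => (mem_Icc.mp (hf i)).2
  rcases le_or_gt k 2 with hk | hk
  · have : k * hi ≤ 2 * hi := Nat.mul_le_mul_right _ hk
    omega
  · have : 3 * lo ≤ k * lo := Nat.mul_le_mul_right _ hk
    omega

lemma Nat.two_mul_card_le_of_add_ne {Z : Finset ℕ} {a b : ℕ} (hZ : Z ⊆ Icc a b)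
    (h : ∀ z ∈ Z, ∀ w ∈ Z, z + w ≠ a + b) : 2 * #Z ≤ b + 1 - a := by
  have hbound : ∀ z ∈ Z, z ≤ a + b := fun z hz => by
    have := mem_Icc.mp (hZ hz); omega
  set W := Z.image (a + b - ·)
  have hW : #W = #Z := Finset.card_image_of_injOn fun x hx y hy hxy => by
    have := hbound x hx; have := hbound y hy; omega
  have hdisj : Disjoint Z W := disjoint_left.mpr fun z hz hzW => by
    obtain ⟨w, hw, rfl⟩ := mem_image.mp hzW
    exact h _ hz w hw (by have := hbound w hw; omega)
  have hsub : Z ∪ W ⊆ Icc a b := union_subset hZ fun x hx => by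
    obtain ⟨z, hz, rfl⟩ := mem_image.mp hx
    have := mem_Icc.mp (hZ hz); exact mem_Icc.mpr (by omega)
  calc 2 * #Z = #(Z ∪ W) := by rw [card_union_of_disjoint hdisj, hW, two_mul]
    _ ≤ #(Icc a b) := card_le_card hsub
    _ = b + 1 - a := Nat.card_Icc a b

lemma Nat.three_mul_card_sub_one_le_card_union_add {A : Finset ℕ} (hA : A.Nonempty)
    (hsf : ∀ x ∈ A, ∀ y ∈ A, x + y ∉ A) : 3 * #A - 1 ≤ #(A ∪ (A + A)) := by
  have hdisj : Disjoint A (A + A) := disjoint_right.mpr fun z hz => by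
    obtain ⟨x, hx, y, hy, rfl⟩ := mem_add.mp hz
    exact hsf x hx y hy
  have := cauchy_davenport_add_of_linearOrder_isCancelAdd hA hA
  rw [card_union_of_disjoint hdisj]
  omega

lemma Nat.three_mul_card_le_of_sumFree_of_two_mul_notMem_closure {A : Finset ℕ} {n : ℕ}
    (hA : A ⊆ Icc 1 n) (hsf : ∀ x ∈ A, ∀ y ∈ A, x + y ∉ A)
    (h2n : 2 * n ∉ AddSubmonoid.closure (A : Set ℕ)) : 3 * #A ≤ n - 1 := by
  rcases A.eq_empty_or_nonempty with rfl | hne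
  · simp
  have hcl : ∀ {a}, a ∈ A → a ∈ AddSubmonoid.closure (A : Set ℕ) :=
    fun ha => AddSubmonoid.subset_closure ha
  have h1 : 1 ∉ A := fun h => h2n (by simpa using nsmul_mem (hcl h) (2 * n))
  have hn : n ∉ A := fun h => h2n (by simpa [two_mul] using add_mem (hcl h) (hcl h))
  have hA' : A ⊆ Icc 2 (n - 1) := fun a ha => by
    have := mem_Icc.mp (hA ha)
    have : a ≠ 1 := fun h => h1 (h ▸ ha)
    have : a ≠ n := fun h => hn (h ▸ ha)
    exact mem_Icc.mpr (by omega)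
  have hn2 : 2 ≤ n := by
    obtain ⟨a, ha⟩ := hne
    have := mem_Icc.mp (hA' ha); omega
  have hZ : A ∪ (A + A) ⊆ Icc 2 (2 * n - 2) := union_subset
    (fun a ha => by have := mem_Icc.mp (hA' ha); exact mem_Icc.mpr (by omega))
    (fun z hz => by
      obtain ⟨x, hx, y, hy, rfl⟩ := mem_add.mp hz
      have := mem_Icc.mp (hA' hx); have := mem_Icc.mp (hA' hy)
      exact mem_Icc.mpr (by omega))
  have hZcl : ∀ z ∈ A ∪ (A + A), z ∈ AddSubmonoid.closure (A : Set ℕ) := fun z hz => by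
    rcases mem_union.mp hz with hz | hz
    · exact hcl hz
    · obtain ⟨x, hx, y, hy, rfl⟩ := mem_add.mp hz
      exact add_mem (hcl hx) (hcl hy)
  have hpair := Nat.two_mul_card_le_of_add_ne hZ fun z hz w hw hzw =>
    h2n (show 2 * n = z + w by omega ▸ add_mem (hZcl z hz) (hZcl w hw))
  have := Nat.three_mul_card_sub_one_le_card_union_add hne hsf
  omega

theorem max_size_sumfree_forbidden_2n (n : ℕ) (hn : 0 < n) :
    IsGreatest {m : ℕ | ∃ A : Finset ℕ, A ⊆ Finset.Icc 1 n ∧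
      (∀ x ∈ A, ∀ y ∈ A, x + y ∉ A) ∧
      (∀ (k : ℕ) (f : Fin k → ℕ), (∀ i, f i ∈ A) → ∑ i, f i ≠ 2 * n) ∧
      A.card = m} ((n - 1) / 3) := by
  have h3m : 3 * ((n - 1) / 3) ≤ n - 1 := Nat.mul_div_le (n - 1) 3
  constructor
  · refine ⟨Icc (n - (n - 1) / 3) (n - 1), fun x hx => ?_, fun x hx y hy => ?_,
      fun k f hf => Nat.fin_sum_ne_of_mem_Icc f hf (by omega) (by omega),
      by rw [Nat.card_Icc]; omega⟩
    · simp only [mem_Icc] at hx ⊢; omega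
    · simp only [mem_Icc] at hx hy ⊢; omega
  · rintro m ⟨A, hA, hsf, hsum, rfl⟩
    have h2n : 2 * n ∉ AddSubmonoid.closure (A : Set ℕ) := fun h => by
      obtain ⟨k, f, hf, hs⟩ := AddSubmonoid.exists_fin_sum_eq_of_mem_closure h
      exact hsum k f hf hs
    exact (Nat.le_div_iff_mul_le three_pos).mpr
      (by linarith [Nat.three_mul_card_le_of_sumFree_of_two_mul_notMem_closure hA hsf h2n])
end

section
/- For every positive integer n and every nonempty sum-free set A ⊆ {1,...,n} with min(A) > n/3 and 2n+1 ∉ 3A, it holds that |A| ≤ ⌊(n+1)/3⌋. -/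
/-!
Let `a = min A`. Inside `[1, n]` we find three pairwise disjoint sets: `A` itself, the shifted
set `{w | w + a ∈ A}` of size `|A| - 1` (disjoint from `A` because `A` is sum-free), and the image
of an injection `A → [1, n]` avoiding both. The injection sends `x` to `2x` when `2x ≤ n`, and
otherwise to `2n + 1 - 2x`, which lies outside `A` because `x + x + (2n + 1 - 2x) = 2n + 1`.
When `2n + 1 - 2x` does land in the shifted set, i.e. `y = 2n + 1 + a - 2x ∈ A`, it is replaced by
`2x - 2a` or `y + a`, whichever lies in `[1, n]`. Hence `3|A| - 1 ≤ n`.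
-/

open Pointwise Finset

section

variable {n a : ℕ} {A : Finset ℕ}

theorem card_filter_add_mem_add_one (hA : ∀ z ∈ A, a ≤ z ∧ z ≤ n) (ha : a ∈ A) :
    #{w ∈ Icc 1 n | w + a ∈ A} + 1 = #A := by
  rw [← card_erase_add_one ha]
  congr 1
  refine card_nbij' (· + a) (· - a) (fun w hw ↦ ?_) (fun z hz ↦ ?_) (fun w _ ↦ by simp)
    (fun z hz ↦ ?_)
  · simp only [coe_filter, mem_Icc, Set.mem_ofPred_eq] at hw
    simp only [coe_erase, Set.mem_sdiff, mem_coe, Set.mem_singleton_iff]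
    exact ⟨hw.2, by omega⟩
  · simp only [coe_erase, Set.mem_sdiff, mem_coe, Set.mem_singleton_iff] at hz
    have := hA z hz.1
    simp only [coe_filter, mem_Icc, Set.mem_ofPred_eq, Nat.sub_add_cancel this.1]
    exact ⟨⟨by omega, by omega⟩, hz.1⟩
  · simp [Nat.sub_add_cancel (hA z (mem_of_mem_erase hz)).1]

/-- An injection of `A` into `[1, n] \ (A ∪ (A - a))`. -/
def toCompl (n a : ℕ) (A : Finset ℕ) (x : ℕ) : ℕ :=
  if 2 * x ≤ n then 2 * x
  else if 2 * n + 1 + a - 2 * x ∈ A then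
    if 2 * x ≤ n + 2 * a then 2 * x - 2 * a else 2 * n + 1 + 2 * a - 2 * x
  else 2 * n + 1 - 2 * x

theorem toCompl_spec (hA : ∀ z ∈ A, a ≤ z ∧ z ≤ n) (ha : a ∈ A) (h3a : n < 3 * a)
    (hsf : ∀ x ∈ A, ∀ y ∈ A, x + y ∉ A)
    (hforb : ∀ x ∈ A, ∀ y ∈ A, ∀ z ∈ A, x + y + z ≠ 2 * n + 1) {x : ℕ} (hx : x ∈ A) :
    toCompl n a A x ∈ Icc 1 n ∧ toCompl n a A x + a ∉ A ∧ toCompl n a A x ∉ A := by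
  obtain ⟨hax, hxn⟩ := hA x hx
  unfold toCompl
  split_ifs with hx2 hy
  · refine ⟨mem_Icc.2 ⟨by omega, hx2⟩, fun h ↦ ?_, by simpa [two_mul] using hsf x hx x hx⟩
    have := hA _ h; omega
  · have := hA _ hy
    refine ⟨mem_Icc.2 ⟨by omega, by omega⟩, fun h ↦ ?_, fun h ↦ hforb _ h _ hy a ha (by omega)⟩
    have := hA _ h; omega
  · have := hA _ hy
    refine ⟨mem_Icc.2 ⟨by omega, by omega⟩, fun h ↦ ?_, fun h ↦ hsf _ hy a ha ?_⟩
    · have := hA _ h; omega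
    · rwa [show 2 * n + 1 + 2 * a - 2 * x = 2 * n + 1 + a - 2 * x + a by omega] at h
  · refine ⟨mem_Icc.2 ⟨by omega, by omega⟩, fun h ↦ hy ?_, fun h ↦ hforb x hx x hx _ h (by omega)⟩
    rwa [show 2 * n + 1 - 2 * x + a = 2 * n + 1 + a - 2 * x by omega] at h

/-- The branch values `2x`, `2x - 2a` are even and `2n + 1 - 2x`, `2n + 1 + 2a - 2x` are odd. -/
theorem toCompl_eq_toCompl {x x' : ℕ} (hx : a ≤ x ∧ x ≤ n) (hx' : a ≤ x' ∧ x' ≤ n)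
    (h3a : n < 3 * a) (h : toCompl n a A x = toCompl n a A x') :
    x = x' ∨ x' = x + a ∨ x = x' + a := by
  unfold toCompl at h
  split_ifs at h <;> omega

theorem toCompl_injOn (hA : ∀ z ∈ A, a ≤ z ∧ z ≤ n) (ha : a ∈ A) (h3a : n < 3 * a)
    (hsf : ∀ x ∈ A, ∀ y ∈ A, x + y ∉ A) : Set.InjOn (toCompl n a A) A := by
  intro x hx x' hx' h
  obtain rfl | rfl | rfl := toCompl_eq_toCompl (hA x hx) (hA x' hx') h3a h
  · rfl
  · exact absurd hx' (hsf x hx a ha)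
  · exact absurd hx (hsf x' hx' a ha)

theorem three_mul_card_le_succ (hA : ∀ z ∈ A, a ≤ z ∧ z ≤ n) (ha : a ∈ A) (h3a : n < 3 * a)
    (hsf : ∀ x ∈ A, ∀ y ∈ A, x + y ∉ A)
    (hforb : ∀ x ∈ A, ∀ y ∈ A, ∀ z ∈ A, x + y + z ≠ 2 * n + 1) :
    3 * #A ≤ n + 1 := by
  set T := {w ∈ Icc 1 n | w + a ∉ A}
  have hAT : A ⊆ T := fun x hx ↦
    mem_filter.2 ⟨mem_Icc.2 ⟨by have := hA x hx; omega, (hA x hx).2⟩, hsf x hx a ha⟩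
  have hshift := card_filter_add_mem_add_one hA ha
  have hsplit : #{w ∈ Icc 1 n | w + a ∈ A} + #T = n := by
    simpa using card_filter_add_card_filter_not (s := Icc 1 n) (· + a ∈ A)
  have hinj : #A ≤ #(T \ A) := by
    refine card_le_card_of_injOn _ (fun x hx ↦ ?_) (toCompl_injOn hA ha h3a hsf)
    obtain ⟨hIcc, hshift, hnot⟩ := toCompl_spec hA ha h3a hsf hforb hx
    exact mem_sdiff.2 ⟨mem_filter.2 ⟨hIcc, hshift⟩, hnot⟩
  rw [card_sdiff_of_subset hAT] at hinj
  omega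

end

theorem sumfree_min_large_forbidden_3A_general (n : ℕ) (A : Finset ℕ)
    (hsub : A ⊆ Finset.Icc 1 n) (hne : A.Nonempty)
    (hmin : 3 * A.min' hne > n)
    (hsf : ∀ x ∈ A, ∀ y ∈ A, x + y ∉ A)
    (hforb : 2 * n + 1 ∉ A + A + A) :
    A.card ≤ (n + 1) / 3 := by
  have hA : ∀ z ∈ A, A.min' hne ≤ z ∧ z ≤ n := fun z hz ↦ ⟨A.min'_le z hz, (mem_Icc.1 (hsub hz)).2⟩
  have hforb' : ∀ x ∈ A, ∀ y ∈ A, ∀ z ∈ A, x + y + z ≠ 2 * n + 1 := fun x hx y hy z hz h ↦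
    hforb (h ▸ add_mem_add (add_mem_add hx hy) hz)
  have := three_mul_card_le_succ hA (A.min'_mem hne) hmin hsf hforb'
  omega

theorem sumfree_min_large_forbidden_3A (n : ℕ) (hn : 0 < n) (A : Finset ℕ)
    (hsub : A ⊆ Finset.Icc 1 n) (hne : A.Nonempty)
    (hmin : 3 * A.min' hne > n)
    (hsf : ∀ x ∈ A, ∀ y ∈ A, x + y ∉ A)
    (hforb : 2 * n + 1 ∉ A + A + A) :
    A.card ≤ (n + 1) / 3 :=
  sumfree_min_large_forbidden_3A_general n A hsub hne hmin hsf hforb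
end

section
/- For every ε > 0 and every sufficiently large integer n, if A ⊆ {1,...,n} has size |A| ≥ (2/3 - ε)·n and 2n+2 ∉ 3A, then |A ∩ (2n/3, n]| ≤ 3εn. -/
/-!
Let `b` be the largest element of `A` in `(2n/3, n]`. For `a ∈ A` in the window `I = [n+2-b, n]`
the reflected point `2n+2-b-a` lies in `I`, and it cannot lie in `A` since otherwise
`a + (2n+2-b-a) + b = 2n+2`. So `A` occupies at most half of `I`, which gives
`2|A| + b ≤ 2n+1`. A large `A` therefore forces `b` to be close to `2n/3`, and the part of `A`
in `(2n/3, n]`, lying in `(2n/3, b]`, is small.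
-/

open Pointwise Finset

theorem two_mul_card_inter_Icc_le {S : Finset ℕ} {l r : ℕ}
    (h : ∀ a ∈ S ∩ Icc l r, l + r - a ∉ S) : 2 * #(S ∩ Icc l r) ≤ r + 1 - l := by
  have hreflect : #(S ∩ Icc l r) ≤ #(Icc l r \ S) := by
    refine card_le_card_of_injOn (fun a => l + r - a) (fun a ha => ?_) (fun a ha a' ha' heq => ?_)
    · have ha' := mem_Icc.1 (mem_inter.1 ha).2
      show l + r - a ∈ Icc l r \ S
      exact mem_sdiff.2 ⟨mem_Icc.2 ⟨by omega, by omega⟩, h a ha⟩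
    · have hmem := mem_Icc.1 (mem_inter.1 ha).2
      have hmem' := mem_Icc.1 (mem_inter.1 ha').2
      simp only at heq
      omega
  have hsplit := card_inter_add_card_sdiff (Icc l r) S
  rw [inter_comm, Nat.card_Icc] at hsplit
  omega

theorem two_mul_card_add_le_of_notMem_add_add {A : Finset ℕ} {n b : ℕ}
    (hA : A ⊆ Icc 1 n) (h3A : 2 * n + 2 ∉ A + A + A) (hb : b ∈ A) :
    2 * #A + b ≤ 2 * n + 1 := by
  obtain ⟨hb1, hbn⟩ := mem_Icc.1 (hA hb)
  have hwindow : 2 * #(A ∩ Icc (n + 2 - b) n) ≤ n + 1 - (n + 2 - b) := by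
    refine two_mul_card_inter_Icc_le fun a ha hreflected => h3A ?_
    obtain ⟨haA, haI⟩ := mem_inter.1 ha
    have hsum : a + (n + 2 - b + n - a) + b = 2 * n + 2 := by
      have := mem_Icc.1 haI
      omega
    exact hsum ▸ add_mem_add (add_mem_add haA hreflected) hb
  have hcover : A ⊆ Icc 1 (n + 1 - b) ∪ A ∩ Icc (n + 2 - b) n := fun x hx => by
    obtain ⟨hx1, hxn⟩ := mem_Icc.1 (hA hx)
    rcases Nat.lt_or_ge x (n + 2 - b) with hlt | hge
    · exact mem_union_left _ (mem_Icc.2 ⟨hx1, by omega⟩)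
    · exact mem_union_right _ (mem_inter.2 ⟨hx, mem_Icc.2 ⟨hge, hxn⟩⟩)
  have hcard : #A ≤ (n + 1 - b) + #(A ∩ Icc (n + 2 - b) n) :=
    calc #A ≤ #(Icc 1 (n + 1 - b) ∪ A ∩ Icc (n + 2 - b) n) := card_le_card hcover
      _ ≤ #(Icc 1 (n + 1 - b)) + #(A ∩ Icc (n + 2 - b) n) := card_union_le _ _
      _ = (n + 1 - b) + #(A ∩ Icc (n + 2 - b) n) := by rw [Nat.card_Icc, Nat.add_sub_cancel]
  omega

theorem card_le_sub_div_three_of_forall_mem {B : Finset ℕ} {m b : ℕ}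
    (hB : ∀ x ∈ B, m < 3 * x ∧ x ≤ b) : #B ≤ b - m / 3 := by
  have hsub : B ⊆ Ioc (m / 3) b := fun x hx => by
    obtain ⟨hlt, hle⟩ := hB x hx
    exact mem_Ioc.2 ⟨by omega, hle⟩
  exact (card_le_card hsub).trans_eq (Nat.card_Ioc _ _)

theorem three_mul_card_filter_add_six_mul_card_le {A : Finset ℕ} {n : ℕ}
    (hA : A ⊆ Icc 1 n) (h3A : 2 * n + 2 ∉ A + A + A) :
    3 * #(A.filter fun x => 2 * n < 3 * x ∧ x ≤ n) + 6 * #A ≤ 4 * n + 5 := by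
  set B := A.filter fun x => 2 * n < 3 * x ∧ x ≤ n
  rcases B.eq_empty_or_nonempty with hB | hB
  · have hsub : A ⊆ Icc 1 (2 * n / 3) := fun x hx => by
      have hx' := mem_Icc.1 (hA hx)
      have hxB : x ∉ B := hB ▸ notMem_empty x
      simp only [B, mem_filter, not_and] at hxB
      exact mem_Icc.2 ⟨hx'.1, by have := hxB hx; omega⟩
    have hcard := card_le_card hsub
    rw [Nat.card_Icc] at hcard
    rw [hB, card_empty]
    omega
  · obtain ⟨hbA, hb, -⟩ := mem_filter.1 (B.max'_mem hB)
    have hbound := two_mul_card_add_le_of_notMem_add_add hA h3A hbA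
    have hBcard : #B ≤ B.max' hB - 2 * n / 3 :=
      card_le_sub_div_three_of_forall_mem fun x hx => ⟨(mem_filter.1 hx).2.1, B.le_max' x hx⟩
    omega

theorem stability_3A (ε : ℝ) (hε : 0 < ε) :
    ∃ N : ℕ, ∀ n : ℕ, N ≤ n → ∀ A : Finset ℕ, A ⊆ Finset.Icc 1 n →
      (2 / 3 - ε) * n ≤ (A.card : ℝ) →
      2 * n + 2 ∉ A + A + A →
      ((A.filter (fun x => 2 * n < 3 * x ∧ x ≤ n)).card : ℝ) ≤ 3 * ε * n := by
  obtain ⟨N, hN⟩ := exists_nat_ge (5 / (3 * ε))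
  refine ⟨N, fun n hn A hA hcard h3A => ?_⟩
  have hεn : 5 ≤ 3 * ε * n := by
    have : 5 / (3 * ε) ≤ n := hN.trans (by exact_mod_cast hn)
    rwa [div_le_iff₀ (by positivity), mul_comm] at this
  have hkey : (3 * #(A.filter fun x => 2 * n < 3 * x ∧ x ≤ n) + 6 * #A : ℝ) ≤ 4 * n + 5 := by
    exact_mod_cast three_mul_card_filter_add_six_mul_card_le hA h3A
  linarith
end

section
/- For integers t ≥ 1, let a set T ⊆ {0,...,2t-1} satisfy 0 ∈ T, |T| = t, and 2t-1 ∉ 3T. Then for every ℓ ∈ {0,...,t-1}, exactly one of ℓ and 2t-1-ℓ belongs to T. -/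
/-!
Since `0 ∈ T`, every sum `a + b` of two elements of `T` lies in `T + T + T`, so no two elements
of `T` add up to `2t - 1`. Hence the fold `x ↦ min x (2t - 1 - x)` of `{0, …, 2t - 1}` onto
`{0, …, t - 1}` is injective on `T`, and as `|T| = t` it maps `T` onto `{0, …, t - 1}`: every
pair `{ℓ, 2t - 1 - ℓ}` meets `T`, and in exactly one point.
-/

open Pointwise

lemma add_ne_of_zero_mem_of_not_mem_add_add {T : Finset ℕ} {n : ℕ} (h0 : 0 ∈ T)
    (hn : n ∉ T + T + T) : ∀ a ∈ T, ∀ b ∈ T, a + b ≠ n := by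
  rintro a ha b hb rfl
  exact hn (by simpa using Finset.add_mem_add (Finset.add_mem_add ha hb) h0)

namespace PairFree

variable {t : ℕ} {T : Finset ℕ}

def fold (t x : ℕ) : ℕ := min x (2 * t - 1 - x)

lemma fold_lt {x : ℕ} (hx : x < 2 * t) : fold t x < t := by
  unfold fold; omega

lemma fold_eq_iff {x ℓ : ℕ} (hx : x < 2 * t) (hℓ : ℓ < t) :
    fold t x = ℓ ↔ x = ℓ ∨ x = 2 * t - 1 - ℓ := by
  unfold fold; omega

variable (hsub : T ⊆ Finset.range (2 * t)) (hpair : ∀ a ∈ T, ∀ b ∈ T, a + b ≠ 2 * t - 1)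
include hsub hpair

lemma injOn_fold : Set.InjOn (fold t) T := by
  intro a ha b hb hab
  have ha' := Finset.mem_range.mp (hsub ha)
  have hb' := Finset.mem_range.mp (hsub hb)
  have := hpair a ha b hb
  unfold fold at hab
  omega

lemma image_fold_eq_range (hcard : T.card = t) : T.image (fold t) = Finset.range t := by
  refine Finset.eq_of_subset_of_card_le (fun y hy => ?_) ?_
  · obtain ⟨x, hx, rfl⟩ := Finset.mem_image.mp hy
    exact Finset.mem_range.mpr (fold_lt (Finset.mem_range.mp (hsub hx)))
  · rw [Finset.card_range, Finset.card_image_of_injOn (injOn_fold hsub hpair), hcard]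

theorem xor_mem_of_card_eq (hcard : T.card = t) {ℓ : ℕ} (hℓ : ℓ < t) :
    Xor (ℓ ∈ T) (2 * t - 1 - ℓ ∈ T) := by
  have not_both : ¬(ℓ ∈ T ∧ 2 * t - 1 - ℓ ∈ T) := fun ⟨h, h'⟩ => hpair ℓ h _ h' (by omega)
  obtain ⟨x, hx, hxℓ⟩ := Finset.mem_image.mp <|
    (image_fold_eq_range hsub hpair hcard).symm ▸ Finset.mem_range.mpr hℓ
  rcases (fold_eq_iff (Finset.mem_range.mp (hsub hx)) hℓ).mp hxℓ with rfl | rfl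
  · exact Or.inl ⟨hx, fun h => not_both ⟨hx, h⟩⟩
  · exact Or.inr ⟨hx, fun h => not_both ⟨h, hx⟩⟩

end PairFree

theorem special_set_exactly_one_general (t : ℕ) (T : Finset ℕ)
    (hsub : T ⊆ Finset.range (2 * t)) (h0 : 0 ∈ T) (hcard : T.card = t)
    (hforb : 2 * t - 1 ∉ T + T + T) :
    ∀ ℓ < t, Xor' (ℓ ∈ T) (2 * t - 1 - ℓ ∈ T) := fun _ hℓ =>
  PairFree.xor_mem_of_card_eq hsub (add_ne_of_zero_mem_of_not_mem_add_add h0 hforb) hcard hℓ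

theorem special_set_exactly_one (t : ℕ) (ht : 1 ≤ t) (T : Finset ℕ)
    (hsub : T ⊆ Finset.range (2 * t)) (h0 : 0 ∈ T) (hcard : T.card = t)
    (hforb : 2 * t - 1 ∉ T + T + T) :
    ∀ ℓ < t, Xor' (ℓ ∈ T) (2 * t - 1 - ℓ ∈ T) :=
  special_set_exactly_one_general t T hsub h0 hcard hforb
end

section
/- For integers t ≥ 1, let T ⊆ {0,...,2t-1} satisfy 0 ∈ T, |T| = t, and 2t-1 ∉ 3T. Then T is closed under addition within the range: for all ℓ₁, ℓ₂ ∈ T with ℓ₁ + ℓ₂ ≤ 2t-1, we have ℓ₁ + ℓ₂ ∈ T. -/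
/-!
Write `N = 2t - 1`. Since `0 ∈ T`, already `N ∉ T + T`, so the reflection `x ↦ N - x` maps
`T` injectively into the complement of `T` in `{0, …, N}`. Both sets have `t` elements, so every
`y ≤ N` outside `T` is `N - c` for some `c ∈ T`. If `a + b ∉ T`, then `a + b = N - c` and
`N = a + b + c ∈ 3T`, a contradiction.
-/

open Pointwise Finset

namespace Finset

variable {m : ℕ} {T : Finset ℕ}

theorem image_reflect_subset_sdiff (hsub : T ⊆ range m) (hT : m - 1 ∉ T + T) :
    T.image (m - 1 - ·) ⊆ range m \ T := by
  intro y hy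
  obtain ⟨x, hx, rfl⟩ := mem_image.mp hy
  have hxm := mem_range.mp (hsub hx)
  refine mem_sdiff.mpr ⟨mem_range.mpr (by omega), fun hy => hT ?_⟩
  convert add_mem_add hx hy using 1
  omega

theorem card_image_reflect (hsub : T ⊆ range m) : #(T.image (m - 1 - ·)) = #T := by
  refine card_image_of_injOn fun x hx y hy hxy => ?_
  have := mem_range.mp (hsub hx)
  have := mem_range.mp (hsub hy)
  omega

theorem image_reflect_eq_sdiff (hsub : T ⊆ range m) (hT : m - 1 ∉ T + T) (hcard : 2 * #T = m) :
    T.image (m - 1 - ·) = range m \ T := by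
  refine eq_of_subset_of_card_le (image_reflect_subset_sdiff hsub hT) ?_
  rw [card_image_reflect hsub, card_sdiff_of_subset hsub, card_range]
  omega

end Finset

theorem special_set_closed_under_addition_general (t : ℕ) (T : Finset ℕ)
    (hsub : T ⊆ Finset.range (2 * t)) (h0 : 0 ∈ T) (hcard : T.card = t)
    (hforb : 2 * t - 1 ∉ T + T + T) :
    ∀ a ∈ T, ∀ b ∈ T, a + b ≤ 2 * t - 1 → a + b ∈ T := by
  have hTT : 2 * t - 1 ∉ T + T := fun h => hforb (subset_add_left _ h0 h)
  have hcompl := image_reflect_eq_sdiff hsub hTT (by rw [hcard])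
  intro a ha b hb hab
  by_contra hab_notin
  have hpos : 0 < 2 * t := mem_range.mp (hsub h0)
  obtain ⟨c, hc, hcab⟩ : ∃ c ∈ T, 2 * t - 1 - c = a + b := by
    rw [← mem_image, hcompl, mem_sdiff, mem_range]
    exact ⟨by omega, hab_notin⟩
  apply hforb
  convert add_mem_add (add_mem_add ha hb) hc using 1
  have := mem_range.mp (hsub hc)
  omega

theorem special_set_closed_under_addition (t : ℕ) (ht : 1 ≤ t) (T : Finset ℕ)
    (hsub : T ⊆ Finset.range (2 * t)) (h0 : 0 ∈ T) (hcard : T.card = t)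
    (hforb : 2 * t - 1 ∉ T + T + T) :
    ∀ a ∈ T, ∀ b ∈ T, a + b ≤ 2 * t - 1 → a + b ∈ T :=
  special_set_closed_under_addition_general t T hsub h0 hcard hforb
end

section
/- For integers t ≥ 1, let T ⊆ {0,...,2t-1} satisfy 0 ∈ T, |T| = t, and 2t-1 ∉ 3T. Then T is t-special, i.e., it additionally satisfies {0,...,2t-1+min(T)} \ (2t-1-T) ⊆ T+T. -/
open Pointwise

/-- A set `T ⊆ {0, …, 2t-1}` is `t`-special if `|T| = t`, `2t-1 ∉ 3T`, and
`[0, 2t-1 + min T] \ (2t-1 - T) ⊆ T + T`. -/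
def IsSpecial (t : ℕ) (T : Finset ℕ) : Prop :=
  T.card = t ∧
  2 * t - 1 ∉ T + T + T ∧
  ∀ x ≤ 2 * t - 1 + T.min.untopD 0, (∀ y ∈ T, 2 * t - 1 - y ≠ x) → x ∈ T + T

/-!
Since `0 ∈ T`, the hypothesis `2t-1 ∉ 3T` gives `2t-1 ∉ T + T`, so `T` is disjoint from its
reflection `2t-1-T`. Both have `t` elements in `{0, …, 2t-1}`, hence they partition it. As
`min T = 0`, an `x` in the range that avoids `2t-1-T` therefore lies in `T = T + 0 ⊆ T + T`.
-/

namespace Finset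

theorem min_untopD_eq_zero_of_zero_mem {A : Finset ℕ} (h0 : 0 ∈ A) : A.min.untopD 0 = 0 := by
  rw [le_antisymm (min_le h0) zero_le]
  rfl

theorem injOn_tsub_range (N : ℕ) : Set.InjOn (N - 1 - ·) (range N : Set ℕ) := by
  intro a ha b hb hab
  simp only [coe_range, Set.mem_Iio] at ha hb hab
  omega

theorem image_tsub_subset_range {N : ℕ} {A : Finset ℕ} (hA : A ⊆ range N) :
    A.image (N - 1 - ·) ⊆ range N :=
  (image_subset_image hA).trans (range_image_pred_top_sub N).le

theorem disjoint_image_tsub_of_not_mem_add {N : ℕ} {A : Finset ℕ} (hA : A ⊆ range N)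
    (hN : N - 1 ∉ A + A) : Disjoint A (A.image (N - 1 - ·)) := by
  refine disjoint_right.2 fun a ha haA => hN ?_
  obtain ⟨y, hy, rfl⟩ := mem_image.1 ha
  have hyN : y < N := mem_range.1 (hA hy)
  exact mem_add.2 ⟨N - 1 - y, haA, y, hy, by omega⟩

theorem union_image_tsub_eq_range {N : ℕ} {A : Finset ℕ} (hA : A ⊆ range N)
    (hdisj : Disjoint A (A.image (N - 1 - ·))) (hcard : N ≤ 2 * A.card) :
    A ∪ A.image (N - 1 - ·) = range N := by
  refine eq_of_subset_of_card_le (union_subset hA (image_tsub_subset_range hA)) ?_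
  rw [card_union_of_disjoint hdisj, card_image_of_injOn ((injOn_tsub_range N).mono hA),
    card_range]
  omega

end Finset

open Finset in
theorem special_of_zero_mem_general (t : ℕ) (T : Finset ℕ)
    (hsub : T ⊆ Finset.range (2 * t)) (h0 : 0 ∈ T) (hcard : T.card = t)
    (hforb : 2 * t - 1 ∉ T + T + T) :
    IsSpecial t T := by
  refine ⟨hcard, hforb, fun x hx hx_refl => ?_⟩
  have ht : 0 < t := hcard ▸ card_pos.2 ⟨0, h0⟩
  rw [min_untopD_eq_zero_of_zero_mem h0, add_zero] at hx
  have hpartition : T ∪ T.image (2 * t - 1 - ·) = range (2 * t) :=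
    union_image_tsub_eq_range hsub
      (disjoint_image_tsub_of_not_mem_add hsub fun h => hforb (subset_add_left _ h0 h))
      (by omega)
  have hx_mem : x ∈ T ∪ T.image (2 * t - 1 - ·) := hpartition ▸ mem_range.2 (by omega)
  rcases mem_union.1 hx_mem with hxT | hx_img
  · exact subset_add_left T h0 hxT
  · obtain ⟨y, hy, rfl⟩ := mem_image.1 hx_img
    exact absurd rfl (hx_refl y hy)

theorem special_of_zero_mem (t : ℕ) (ht : 1 ≤ t) (T : Finset ℕ)
    (hsub : T ⊆ Finset.range (2 * t)) (h0 : 0 ∈ T) (hcard : T.card = t)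
    (hforb : 2 * t - 1 ∉ T + T + T) :
    IsSpecial t T :=
  special_of_zero_mem_general t T hsub h0 hcard hforb
end

section
/- For every integer t ≥ 1, the number of t-special sets T ⊆ {0,...,2t-1} with 0 ∈ T equals the number of sets A ⊆ {1,...,t-1} that are closed under addition (x, y ∈ A and x+y ≤ t-1 imply x+y ∈ A) and satisfy 2(t-1)+1 ∉ 3A. -/
/-!
If `0 ∈ T` and `2t-1 ∉ 3T`, then `T` meets each pair `{x, 2t-1-x}` at most once (else
`x + (2t-1-x) + 0 = 2t-1`), so `|T| = t` forces it to meet each pair exactly once: `T` is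
self-complementary under `x ↦ 2t-1-x` and is determined by its part below `t`. For such `T`,
`a + b + c = 2t-1` with `c ∈ T` means exactly `a + b ∉ T`, so `2t-1 ∉ 3T` says that `T` is closed
under sums up to `2t-1`, and the covering condition holds trivially as `x = x + 0`. Finally the
closedness of `T` reduces to the closedness of `A = T ∩ [1, t-1]` together with `2t-1 ∉ 3A`.
-/

open Pointwise

open Finset

def IsSelfComplementary (n : ℕ) (T : Finset ℕ) : Prop :=
  ∀ x ≤ n, x ∈ T ↔ n - x ∉ T

def IsAddClosedUpTo (m : ℕ) (A : Finset ℕ) : Prop :=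
  ∀ x ∈ A, ∀ y ∈ A, x + y ≤ m → x + y ∈ A

lemma mem_add_add_iff {n : ℕ} {A B C : Finset ℕ} :
    n ∈ A + B + C ↔ ∃ a ∈ A, ∃ b ∈ B, ∃ c ∈ C, a + b + c = n := by
  simp only [mem_add, exists_exists_and_exists_and_eq_and]

namespace IsSelfComplementary

variable {n : ℕ} {T : Finset ℕ}

lemma notMem_add_add_iff (hT : IsSelfComplementary n T) :
    n ∉ T + T + T ↔ IsAddClosedUpTo n T := by
  have key : ∀ a b, (∃ c ∈ T, a + b + c = n) ↔ a + b ≤ n ∧ a + b ∉ T := fun a b => by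
    constructor
    · rintro ⟨c, hc, rfl⟩
      refine ⟨le_add_right le_rfl, fun hab => (hT _ (le_add_right le_rfl)).mp hab ?_⟩
      rwa [Nat.add_sub_cancel_left]
    · rintro ⟨hab, habT⟩
      refine ⟨n - (a + b), ?_, by omega⟩
      by_contra h
      exact habT ((hT _ hab).mpr h)
  simp only [mem_add_add_iff, key, IsAddClosedUpTo, not_exists, not_and, not_not]

lemma eq_of_forall_lt_iff {t : ℕ} {S : Finset ℕ} (hT : IsSelfComplementary (2 * t - 1) T)
    (hS : IsSelfComplementary (2 * t - 1) S) (hTsub : T ⊆ range (2 * t))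
    (hSsub : S ⊆ range (2 * t)) (h : ∀ x < t, x ∈ T ↔ x ∈ S) : T = S := by
  ext x
  by_cases hx : x < 2 * t
  · rcases lt_or_ge x t with hxt | hxt
    · exact h x hxt
    · rw [hT x (by omega), hS x (by omega), h _ (by omega)]
  · exact iff_of_false (fun hxT => hx (mem_range.mp (hTsub hxT)))
      (fun hxS => hx (mem_range.mp (hSsub hxS)))

end IsSelfComplementary

/-- Folding `[0, 2t)` onto `[0, t)` by `x ↦ min x (2t-1-x)` is injective on a set meeting each
pair `{x, 2t-1-x}` at most once, and surjective exactly when the set is self-complementary. -/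
lemma card_eq_iff_isSelfComplementary {t : ℕ} {T : Finset ℕ} (ht : 1 ≤ t)
    (hsub : T ⊆ range (2 * t)) (hdisj : ∀ x ∈ T, 2 * t - 1 - x ∉ T) :
    #T = t ↔ IsSelfComplementary (2 * t - 1) T := by
  set fold : ℕ → ℕ := fun x => min x (2 * t - 1 - x)
  have hlt : ∀ x ∈ T, x < 2 * t := fun x hx => mem_range.mp (hsub hx)
  have hinj : Set.InjOn fold T := by
    intro x hx y hy hxy
    have := hlt x hx; have := hlt y hy
    by_contra hne
    have : y = 2 * t - 1 - x := by simp only [fold] at hxy; omega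
    exact hdisj x hx (this ▸ hy)
  have hmaps : T.image fold ⊆ range t := by
    intro k hk
    obtain ⟨x, hx, rfl⟩ := mem_image.mp hk
    have := hlt x hx
    exact mem_range.mpr (by simp only [fold]; omega)
  have hcard : #T = t ↔ T.image fold = range t := by
    rw [← card_image_of_injOn hinj]
    refine ⟨fun h => eq_of_subset_of_card_le hmaps (by simp [h]), fun h => by simp [h]⟩
  rw [hcard]
  constructor
  · intro himg x hx
    refine ⟨hdisj x, fun hxc => ?_⟩
    have : fold x ∈ T.image fold := himg ▸ mem_range.mpr (by simp only [fold]; omega)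
    obtain ⟨y, hy, hyx⟩ := mem_image.mp this
    have := hlt y hy
    have : y = x ∨ y = 2 * t - 1 - x := by simp only [fold] at hyx; omega
    rcases this with rfl | rfl
    · exact hy
    · exact absurd hy hxc
  · intro hT
    refine eq_of_subset_of_card_le hmaps (card_le_card fun k hk => ?_)
    have hk := mem_range.mp hk
    by_cases hkT : k ∈ T
    · exact mem_image.mpr ⟨k, hkT, by simp only [fold]; omega⟩
    · have hkT' : 2 * t - 1 - k ∈ T := by
        by_contra h
        exact hkT ((hT k (by omega)).mpr h)
      exact mem_image.mpr ⟨2 * t - 1 - k, hkT', by simp only [fold]; omega⟩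

lemma isSpecial_iff {t : ℕ} {T : Finset ℕ} (ht : 1 ≤ t) (hsub : T ⊆ range (2 * t))
    (h0 : 0 ∈ T) :
    IsSpecial t T ↔ IsSelfComplementary (2 * t - 1) T ∧ IsAddClosedUpTo (2 * t - 1) T := by
  constructor
  · rintro ⟨hcard, h3, -⟩
    have hdisj : ∀ x ∈ T, 2 * t - 1 - x ∉ T := by
      intro x hx hx'
      have := mem_range.mp (hsub hx)
      exact h3 (mem_add_add_iff.mpr ⟨x, hx, _, hx', 0, h0, by omega⟩)
    have hT := (card_eq_iff_isSelfComplementary ht hsub hdisj).mp hcard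
    exact ⟨hT, hT.notMem_add_add_iff.mp h3⟩
  · rintro ⟨hT, hclosed⟩
    have hdisj : ∀ x ∈ T, 2 * t - 1 - x ∉ T := fun x hx =>
      (hT x (by have := mem_range.mp (hsub hx); omega)).mp hx
    refine ⟨(card_eq_iff_isSelfComplementary ht hsub hdisj).mpr hT,
      hT.notMem_add_add_iff.mpr hclosed, ?_⟩
    have hmin : T.min.untopD 0 = 0 := by rw [Finset.min_eq_bot.mpr h0]; rfl
    rw [hmin]
    intro x hx hnot
    have hxT : x ∈ T := (hT x hx).mpr fun h => hnot _ h (by omega)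
    simpa using add_mem_add hxT h0

lemma IsAddClosedUpTo.inter_Icc {m m' a : ℕ} {T : Finset ℕ} (hT : IsAddClosedUpTo m T)
    (hm : m' ≤ m) : IsAddClosedUpTo m' (T ∩ Icc a m') := by
  intro x hx y hy hxy
  simp only [mem_inter, mem_Icc] at hx hy ⊢
  exact ⟨hT x hx.1 y hy.1 (by omega), by omega, hxy⟩

lemma IsAddClosedUpTo.insert_zero {m : ℕ} {A : Finset ℕ} (hA : IsAddClosedUpTo m A) :
    IsAddClosedUpTo m (insert 0 A) := by
  intro x hx y hy hxy
  rcases mem_insert.mp hx with rfl | hx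
  · simpa using hy
  rcases mem_insert.mp hy with rfl | hy
  · simpa using mem_insert_of_mem hx
  exact mem_insert_of_mem (hA x hx y hy hxy)

lemma notMem_add_add_insert_zero {t : ℕ} {A : Finset ℕ} (ht : 1 ≤ t) (hA : A ⊆ Icc 1 (t - 1))
    (h3 : 2 * t - 1 ∉ A + A + A) : 2 * t - 1 ∉ insert 0 A + insert 0 A + insert 0 A := by
  have hle : ∀ x ∈ insert 0 A, x ≤ t - 1 := fun x hx => by
    rcases mem_insert.mp hx with rfl | hx
    · exact Nat.zero_le _
    · exact (mem_Icc.mp (hA hx)).2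
  rw [mem_add_add_iff]
  rintro ⟨a, ha, b, hb, c, hc, habc⟩
  have hat := hle a ha; have hbt := hle b hb; have hct := hle c hc
  have ha0 : a ≠ 0 := by omega
  have hb0 : b ≠ 0 := by omega
  have hc0 : c ≠ 0 := by omega
  exact h3 (mem_add_add_iff.mpr ⟨a, (mem_insert.mp ha).resolve_left ha0,
    b, (mem_insert.mp hb).resolve_left hb0, c, (mem_insert.mp hc).resolve_left hc0, habc⟩)

/-- The self-complementary subset of `[0, 2t)` whose lower half `[0, t)` is `B ∩ [0, t)`. -/
def completion (t : ℕ) (B : Finset ℕ) : Finset ℕ :=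
  (range (2 * t)).filter fun x => x < t ∧ x ∈ B ∨ t ≤ x ∧ 2 * t - 1 - x ∉ B

section completion

variable {t : ℕ} {B : Finset ℕ}

lemma mem_completion {x : ℕ} :
    x ∈ completion t B ↔ x < 2 * t ∧ (x < t ∧ x ∈ B ∨ t ≤ x ∧ 2 * t - 1 - x ∉ B) := by
  simp [completion]

lemma completion_subset_range : completion t B ⊆ range (2 * t) := filter_subset _ _

lemma mem_completion_of_lt {x : ℕ} (hx : x < t) : x ∈ completion t B ↔ x ∈ B := by
  simp only [mem_completion]
  refine ⟨?_, fun h => ⟨by omega, Or.inl ⟨hx, h⟩⟩⟩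
  rintro ⟨-, ⟨-, h⟩ | ⟨h, -⟩⟩
  · exact h
  · omega

lemma reflect_mem_completion_of_lt {x : ℕ} (hx : x < t) :
    2 * t - 1 - x ∈ completion t B ↔ x ∉ B := by
  simp only [mem_completion, show 2 * t - 1 - (2 * t - 1 - x) = x by omega]
  refine ⟨?_, fun h => ⟨by omega, Or.inr ⟨by omega, h⟩⟩⟩
  rintro ⟨-, ⟨h, -⟩ | ⟨-, h⟩⟩
  · omega
  · exact h

lemma isSelfComplementary_completion (ht : 1 ≤ t) :
    IsSelfComplementary (2 * t - 1) (completion t B) := by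
  intro x hx
  rcases lt_or_ge x t with hxt | hxt
  · rw [mem_completion_of_lt hxt, reflect_mem_completion_of_lt hxt, not_not]
  · have hy : 2 * t - 1 - x < t := by omega
    rw [mem_completion_of_lt hy, ← reflect_mem_completion_of_lt hy,
      show 2 * t - 1 - (2 * t - 1 - x) = x by omega]

lemma isAddClosedUpTo_completion (hB : IsAddClosedUpTo (t - 1) B)
    (h3 : 2 * t - 1 ∉ B + B + B) : IsAddClosedUpTo (2 * t - 1) (completion t B) := by
  have low_high : ∀ a b, a < t → a ∈ B → t ≤ b → 2 * t - 1 - b ∉ B → a + b ≤ 2 * t - 1 →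
      2 * t - 1 - (a + b) ∉ B := fun a b ha haB hb hbB hab habB =>
    hbB (by simpa [show a + (2 * t - 1 - (a + b)) = 2 * t - 1 - b by omega]
      using hB a haB _ habB (by omega))
  intro a ha b hb hab
  rw [mem_completion] at ha hb ⊢
  refine ⟨by omega, ?_⟩
  obtain ⟨ha2, ⟨ha, haB⟩ | ⟨ha, haB⟩⟩ := ha <;> obtain ⟨hb2, ⟨hb, hbB⟩ | ⟨hb, hbB⟩⟩ := hb
  · rcases lt_or_ge (a + b) t with habt | habt
    · exact Or.inl ⟨habt, hB a haB b hbB (by omega)⟩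
    · exact Or.inr ⟨habt, fun h => h3 (mem_add_add_iff.mpr ⟨a, haB, b, hbB, _, h, by omega⟩)⟩
  · exact Or.inr ⟨by omega, low_high a b ha haB hb hbB hab⟩
  · exact Or.inr ⟨by omega, add_comm a b ▸ low_high b a hb hbB ha haB (by omega)⟩
  · omega

lemma completion_insert_zero_inter_Icc {A : Finset ℕ} (hA : A ⊆ Icc 1 (t - 1)) :
    completion t (insert 0 A) ∩ Icc 1 (t - 1) = A := by
  ext x
  simp only [mem_inter, mem_completion, mem_insert, mem_Icc]
  constructor
  · rintro ⟨⟨-, ⟨-, rfl | hx⟩ | ⟨hx, -⟩⟩, h1, h2⟩ <;> first | exact hx | omega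
  · intro hx
    have := mem_Icc.mp (hA hx)
    exact ⟨⟨by omega, Or.inl ⟨by omega, Or.inr hx⟩⟩, this⟩

end completion

theorem count_special_eq_count_closed (t : ℕ) (ht : 1 ≤ t) :
    Set.ncard {T : Finset ℕ | T ⊆ Finset.range (2 * t) ∧ IsSpecial t T ∧ 0 ∈ T} =
    Set.ncard {A : Finset ℕ | A ⊆ Finset.Icc 1 (t - 1) ∧
      (∀ x ∈ A, ∀ y ∈ A, x + y ≤ t - 1 → x + y ∈ A) ∧
      2 * (t - 1) + 1 ∉ A + A + A} := by
  have hodd : 2 * (t - 1) + 1 = 2 * t - 1 := by omega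
  refine Set.ncard_congr (fun T _ => T ∩ Icc 1 (t - 1)) ?_ ?_ ?_
  · rintro T ⟨hsub, hspec, h0⟩
    refine ⟨inter_subset_right, ((isSpecial_iff ht hsub h0).mp hspec).2.inter_Icc (by omega),
      fun h => hspec.2.1 ?_⟩
    rw [hodd] at h
    exact add_subset_add (add_subset_add inter_subset_left inter_subset_left) inter_subset_left h
  · rintro T S ⟨hTsub, hT, hT0⟩ ⟨hSsub, hS, hS0⟩ hTS
    refine ((isSpecial_iff ht hTsub hT0).mp hT).1.eq_of_forall_lt_iff
      ((isSpecial_iff ht hSsub hS0).mp hS).1 hTsub hSsub fun x hx => ?_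
    rcases Nat.eq_zero_or_pos x with rfl | hx0
    · exact iff_of_true hT0 hS0
    · have hxI : x ∈ Icc 1 (t - 1) := mem_Icc.mpr ⟨hx0, by omega⟩
      simpa [hxI] using congrArg (x ∈ ·) hTS
  · rintro A ⟨hA, hclosed, h3⟩
    rw [hodd] at h3
    have h0 : 0 ∈ completion t (insert 0 A) := (mem_completion_of_lt ht).mpr (mem_insert_self 0 A)
    refine ⟨_, ⟨completion_subset_range, ?_, h0⟩, completion_insert_zero_inter_Icc hA⟩
    exact (isSpecial_iff ht completion_subset_range h0).mpr ⟨isSelfComplementary_completion ht,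
      isAddClosedUpTo_completion (IsAddClosedUpTo.insert_zero hclosed)
        (notMem_add_add_insert_zero ht hA h3)⟩
end

section
/- For every integer n ≥ 1, the number of sets A ⊆ {1,...,n} that are closed under addition (x, y ∈ A with x + y ≤ n implies x + y ∈ A) and satisfy 2n+1 ∉ 3A is at most the number of sum-free sets D ⊆ {1,...,n} with 2n+1 ∉ ∑D. -/
/-!
Send a closed set `A` to its set of atoms `A \ (A + A)`, the elements that are not a sum of two
elements of `A`. The atoms are sum-free, and they determine `A`: every element of `A` is a sum of
atoms, and conversely every sum of atoms that is at most `n` lies in `A`. So the map is injective.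
Finally no sum of elements of `A` (a fortiori of atoms) equals `2n + 1`: among any four summands
one of the pairs `{a, b}`, `{c, d}` sums to at most `n`, so it can be merged into one element of
`A`, until three summands are left, which `2n + 1 ∉ 3A` rules out.
-/

open Pointwise

section

variable {n : ℕ} {A : Finset ℕ}

theorem List.sum_mem_of_addClosed (hcl : ∀ x ∈ A, ∀ y ∈ A, x + y ≤ n → x + y ∈ A) :
    ∀ l : List ℕ, l ≠ [] → (∀ x ∈ l, x ∈ A) → l.sum ≤ n → l.sum ∈ A
  | [], hne, _, _ => absurd rfl hne
  | [a], _, hl, _ => by simpa using hl a (by simp)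
  | a :: b :: t, _, hl, hsum => by
    have htail : (b :: t).sum ∈ A :=
      List.sum_mem_of_addClosed hcl (b :: t) (by simp) (fun x hx => hl x (by simp [hx]))
        (by simp only [List.sum_cons] at hsum ⊢; omega)
    simpa using hcl a (hl a (by simp)) _ htail (by simpa using hsum)

theorem List.sum_ne_two_mul_add_one_of_addClosed (hA : A ⊆ Finset.Icc 1 n)
    (hcl : ∀ x ∈ A, ∀ y ∈ A, x + y ≤ n → x + y ∈ A) (h3 : 2 * n + 1 ∉ A + A + A) :
    ∀ l : List ℕ, (∀ x ∈ l, x ∈ A) → l.sum ≠ 2 * n + 1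
  | [], _ => by simp
  | [a], hl => by
    have := Finset.mem_Icc.mp (hA (hl a (by simp)))
    simp only [List.sum_singleton]; omega
  | [a, b], hl => by
    have := Finset.mem_Icc.mp (hA (hl a (by simp)))
    have := Finset.mem_Icc.mp (hA (hl b (by simp)))
    simp only [List.sum_cons, List.sum_nil]; omega
  | [a, b, c], hl => fun hsum => h3 <| by
    simp only [List.sum_cons, List.sum_nil, add_zero, ← add_assoc] at hsum
    exact hsum ▸ Finset.add_mem_add (Finset.add_mem_add (hl a (by simp)) (hl b (by simp)))
      (hl c (by simp))
  | a :: b :: c :: d :: t, hl => fun hsum => by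
    simp only [List.sum_cons] at hsum
    by_cases hab : a + b ≤ n
    · refine List.sum_ne_two_mul_add_one_of_addClosed hA hcl h3 ((a + b) :: c :: d :: t) ?_
        (by simp only [List.sum_cons]; omega)
      simp only [List.mem_cons] at hl ⊢
      rintro x (rfl | rfl | rfl | hx)
      exacts [hcl a (hl a (by simp)) b (hl b (by simp)) hab, hl _ (by simp),
        hl _ (by simp), hl x (by simp [hx])]
    · refine List.sum_ne_two_mul_add_one_of_addClosed hA hcl h3 (a :: b :: (c + d) :: t) ?_
        (by simp only [List.sum_cons]; omega)
      simp only [List.mem_cons] at hl ⊢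
      rintro x (rfl | rfl | rfl | hx)
      exacts [hl _ (by simp), hl _ (by simp),
        hcl c (hl c (by simp)) d (hl d (by simp)) (by omega), hl x (by simp [hx])]
termination_by l => l.length

end

def Finset.atoms (A : Finset ℕ) : Finset ℕ := A \ (A + A)

namespace Finset

variable {n : ℕ} {A B : Finset ℕ}

theorem atoms_subset (A : Finset ℕ) : A.atoms ⊆ A := sdiff_subset

theorem add_notMem_atoms {x y : ℕ} (hx : x ∈ A.atoms) (hy : y ∈ A.atoms) : x + y ∉ A.atoms :=
  fun hxy => (mem_sdiff.mp hxy).2 (add_mem_add (A.atoms_subset hx) (A.atoms_subset hy))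

theorem exists_list_atoms_sum_eq (h0 : 0 ∉ A) :
    ∀ a ∈ A, ∃ l : List ℕ, (∀ x ∈ l, x ∈ A.atoms) ∧ l.sum = a := by
  intro a
  induction a using Nat.strong_induction_on with
  | _ a ih =>
    intro ha
    by_cases hsplit : a ∈ A + A
    · obtain ⟨x, hx, y, hy, rfl⟩ := mem_add.mp hsplit
      have hx0 : x ≠ 0 := fun h => h0 (h ▸ hx)
      have hy0 : y ≠ 0 := fun h => h0 (h ▸ hy)
      obtain ⟨l₁, hl₁, rfl⟩ := ih x (by omega) hx
      obtain ⟨l₂, hl₂, rfl⟩ := ih y (by omega) hy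
      exact ⟨l₁ ++ l₂, by simpa [or_imp, forall_and] using ⟨hl₁, hl₂⟩, List.sum_append⟩
    · exact ⟨[a], by simpa [atoms] using ⟨ha, hsplit⟩, List.sum_singleton⟩

theorem subset_of_atoms_subset (hA : A ⊆ Icc 1 n)
    (hcl : ∀ x ∈ B, ∀ y ∈ B, x + y ≤ n → x + y ∈ B) (hAB : A.atoms ⊆ B) : A ⊆ B := by
  intro a ha
  have ha' := mem_Icc.mp (hA ha)
  obtain ⟨l, hl, rfl⟩ := exists_list_atoms_sum_eq (fun h => by simpa using hA h) a ha
  have hne : l ≠ [] := by rintro rfl; simp at ha'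
  exact List.sum_mem_of_addClosed hcl l hne (fun x hx => hAB (hl x hx)) ha'.2

end Finset

theorem count_closed_le_count_sumfree_general (n : ℕ) :
    Set.ncard {A : Finset ℕ | A ⊆ Finset.Icc 1 n ∧
      (∀ x ∈ A, ∀ y ∈ A, x + y ≤ n → x + y ∈ A) ∧
      2 * n + 1 ∉ A + A + A} ≤
    Set.ncard {D : Finset ℕ | D ⊆ Finset.Icc 1 n ∧
      (∀ x ∈ D, ∀ y ∈ D, x + y ∉ D) ∧
      (∀ (k : ℕ) (f : Fin k → ℕ), (∀ i, f i ∈ D) → ∑ i, f i ≠ 2 * n + 1)} := by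
  refine Set.ncard_le_ncard_of_injOn Finset.atoms ?_ ?_
    ((Set.finite_Iic (Finset.Icc 1 n)).subset fun D hD => hD.1)
  · rintro A ⟨hA, hcl, h3⟩
    refine ⟨A.atoms_subset.trans hA, fun x hx y hy => Finset.add_notMem_atoms hx hy,
      fun k f hf hsum => ?_⟩
    refine List.sum_ne_two_mul_add_one_of_addClosed hA hcl h3 (List.ofFn f) ?_ (by rwa [List.sum_ofFn])
    simpa [List.mem_ofFn] using fun i => A.atoms_subset (hf i)
  · rintro A ⟨hA, hclA, -⟩ B ⟨hB, hclB, -⟩ hAB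
    exact (Finset.subset_of_atoms_subset hA hclB (hAB ▸ B.atoms_subset)).antisymm
      (Finset.subset_of_atoms_subset hB hclA (hAB ▸ A.atoms_subset))

theorem count_closed_le_count_sumfree (n : ℕ) (hn : 1 ≤ n) :
    Set.ncard {A : Finset ℕ | A ⊆ Finset.Icc 1 n ∧
      (∀ x ∈ A, ∀ y ∈ A, x + y ≤ n → x + y ∈ A) ∧
      2 * n + 1 ∉ A + A + A} ≤
    Set.ncard {D : Finset ℕ | D ⊆ Finset.Icc 1 n ∧
      (∀ x ∈ D, ∀ y ∈ D, x + y ∉ D) ∧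
      (∀ (k : ℕ) (f : Fin k → ℕ), (∀ i, f i ∈ D) → ∑ i, f i ≠ 2 * n + 1)} :=
  count_closed_le_count_sumfree_general n
end

section
/- Let x₁, ..., x_k (k ≥ 3) be positive integers with x₁ + ... + x_k = 2n+1 for a positive integer n, and each xᵢ ≤ n. Then the indices {1,...,k} can be partitioned into 3 nonempty-or-empty blocks such that the sum of the xᵢ in each block is at most n. -/
/-!
Choose an inclusion-maximal set `t` of indices whose sum is at most `n`. If `t` is not everything,
adding any further index `b` pushes the sum above `n`, so the rest has sum at most
`(2n + 1) - (n + 1) = n`; the blocks are `t`, `{b}` and the rest.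
-/

open Finset

theorem Finset.exists_maximal_insert {ι : Type*} [Fintype ι] [DecidableEq ι]
    (p : Finset ι → Prop) (h₀ : p ∅) :
    ∃ t, p t ∧ ∀ b ∉ t, ¬ p (insert b t) := by
  classical
  obtain ⟨t, ht, hmax⟩ := exists_max_image (univ.powerset.filter p) card ⟨∅, by simpa using h₀⟩
  refine ⟨t, (mem_filter.1 ht).2, fun b hb hpb => ?_⟩
  have := hmax (insert b t) (by simpa using hpb)
  rw [card_insert_of_notMem hb] at this
  omega

theorem exists_three_blocks_sum_le {ι : Type*} [Fintype ι] (x : ι → ℕ) (n : ℕ)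
    (hx : ∀ i, x i ≤ n) (hsum : ∑ i, x i ≤ 2 * n + 1) :
    ∃ P : ι → Fin 3, ∀ j : Fin 3, ∑ i ∈ univ.filter (fun i => P i = j), x i ≤ n := by
  classical
  obtain ⟨t, ht, hmax⟩ := exists_maximal_insert (fun t => ∑ i ∈ t, x i ≤ n) (by simp)
  by_cases hfull : ∀ b, b ∈ t
  · refine ⟨fun _ => 0, fun j => ?_⟩
    have htot : ∑ i, x i ≤ n := by rwa [eq_univ_of_forall hfull] at ht
    fin_cases j <;> simp [htot]
  obtain ⟨b, hb⟩ := not_forall.1 hfull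
  set P : ι → Fin 3 := fun i => if i ∈ t then 0 else if i = b then 1 else 2
  have hfiber₀ : univ.filter (fun i => P i = 0) = t := by
    ext i; by_cases hi : i ∈ t <;> by_cases hib : i = b <;> simp [P, hi, hib]
  have hfiber₁ : univ.filter (fun i => P i = 1) = {b} := by
    ext i; by_cases hi : i ∈ t <;> by_cases hib : i = b <;> simp [P, hi, hib, hb, Ne.symm]
  have hover : n < ∑ i ∈ t, x i + x b := by
    simpa [sum_insert hb, add_comm] using hmax b hb
  have htotal : ∑ j : Fin 3, ∑ i ∈ univ.filter (fun i => P i = j), x i = ∑ i, x i :=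
    sum_fiberwise univ P x
  rw [Fin.sum_univ_three, hfiber₀, hfiber₁, sum_singleton] at htotal
  refine ⟨P, fun j => ?_⟩
  fin_cases j
  · simpa [hfiber₀] using ht
  · simpa [hfiber₁] using hx b
  · show ∑ i ∈ univ.filter (fun i => P i = 2), x i ≤ n
    omega

theorem partition_into_three_blocks_general (n k : ℕ)
    (x : Fin k → ℕ) (hx : ∀ i, x i ∈ Finset.Icc 1 n)
    (hsum : ∑ i, x i = 2 * n + 1) :
    ∃ P : Fin k → Fin 3, ∀ j : Fin 3,
      ∑ i ∈ Finset.univ.filter (fun i => P i = j), x i ≤ n :=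
  exists_three_blocks_sum_le x n (fun i => (Finset.mem_Icc.1 (hx i)).2) hsum.le

theorem partition_into_three_blocks (n k : ℕ) (hn : 0 < n) (hk : 3 ≤ k)
    (x : Fin k → ℕ) (hx : ∀ i, x i ∈ Finset.Icc 1 n)
    (hsum : ∑ i, x i = 2 * n + 1) :
    ∃ P : Fin k → Fin 3, ∀ j : Fin 3,
      ∑ i ∈ Finset.univ.filter (fun i => P i = j), x i ≤ n :=
  partition_into_three_blocks_general n k x hx hsum
end
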